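/- arXiv:2010.07802 — 3 statements merged into one kernel-verified Lean document; each statement's English description precedes it below -/
import Mathlib

section
/- The infinite dihedral group is the free product of two copies of ℤ/2ℤ: the group homomorphism from the free product (ℤ/2ℤ) * (ℤ/2ℤ) to the infinite dihedral group D_∞ that sends the generator of the first factor to the reflection sr 0 and the generator of the second factor to the reflection sr 1 is a group isomorphism. -/
open DihedralGroup

/-!
For involutions `a`, `b` of any group, `a` conjugates `a * b` to its inverse, so
`r i ↦ (a * b) ^ i`, `sr i ↦ a * (a * b) ^ i` is a homomorphism `D_∞ → G` sending `sr 0 ↦ a` and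
`sr 1 ↦ b`. Applied to the two generators of `ℤ/2ℤ * ℤ/2ℤ`, it is inverse to `φ`: both composites
fix generators (`sr 0` and `sr 1` generate every dihedral group).
-/

section Involutions

variable {G : Type*} [Group G] {a b : G}

theorem zpow_mul_eq_mul_zpow_neg_of_mul_self (ha : a * a = 1) (hb : b * b = 1) (i : ℤ) :
    (a * b) ^ i * a = a * (a * b) ^ (-i) := by
  have hconj : SemiconjBy a (a * b)⁻¹ (a * b) := by
    rw [SemiconjBy, mul_inv_rev, inv_eq_of_mul_eq_one_left ha, inv_eq_of_mul_eq_one_left hb,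
      ← mul_assoc]
  rw [← (hconj.zpow_right i).eq, inv_zpow, zpow_neg]

theorem zpow_mul_mul_zpow_eq_mul_zpow_sub_of_mul_self (ha : a * a = 1) (hb : b * b = 1)
    (i j : ℤ) : (a * b) ^ i * (a * (a * b) ^ j) = a * (a * b) ^ (j - i) := by
  rw [← mul_assoc, zpow_mul_eq_mul_zpow_neg_of_mul_self ha hb, mul_assoc, ← zpow_add,
    neg_add_eq_sub]

theorem mul_zpow_mul_mul_zpow_eq_zpow_sub_of_mul_self (ha : a * a = 1) (hb : b * b = 1)
    (i j : ℤ) : a * (a * b) ^ i * (a * (a * b) ^ j) = (a * b) ^ (j - i) := by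
  rw [mul_assoc, zpow_mul_mul_zpow_eq_mul_zpow_sub_of_mul_self ha hb, ← mul_assoc, ha, one_mul]

end Involutions

namespace DihedralGroup

theorem hom_ext_sr {n : ℕ} {G : Type*} [Group G] {f g : DihedralGroup n →* G}
    (h₀ : f (sr 0) = g (sr 0)) (h₁ : f (sr 1) = g (sr 1)) : f = g := by
  have hr : ∀ i, f (r i) = g (r i) := fun i => by
    have hr₁ : (r 1 : DihedralGroup n) = sr 0 * sr 1 := by rw [sr_mul_sr, sub_zero]
    rw [← ZMod.intCast_zmod_cast i, ← r_one_zpow, hr₁, map_zpow, map_zpow, map_mul, map_mul,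
      h₀, h₁]
  ext (i | i)
  · exact hr i
  · rw [← zero_add i, ← sr_mul_r, map_mul, map_mul, h₀, hr]

section LiftInvolutions

variable {G : Type*} [Group G] {a b : G}

def liftInvolutions (ha : a * a = 1) (hb : b * b = 1) : DihedralGroup 0 →* G where
  -- `ZMod 0` is `ℤ` by definition; the ascriptions let `i` serve as an integer exponent.
  toFun
    | r (i : ℤ) => (a * b) ^ i
    | sr (i : ℤ) => a * (a * b) ^ i
  map_one' := zpow_zero _
  map_mul' := by
    rintro (i | i) (j | j)
    · exact zpow_add _ i j
    · exact (zpow_mul_mul_zpow_eq_mul_zpow_sub_of_mul_self ha hb i j).symm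
    · exact (congrArg (a * ·) (zpow_add _ i j)).trans (mul_assoc _ _ _).symm
    · exact (mul_zpow_mul_mul_zpow_eq_zpow_sub_of_mul_self ha hb i j).symm

@[simp]
theorem liftInvolutions_sr_zero (ha : a * a = 1) (hb : b * b = 1) :
    liftInvolutions ha hb (sr 0) = a :=
  mul_eq_left.mpr (zpow_zero _)

@[simp]
theorem liftInvolutions_sr_one (ha : a * a = 1) (hb : b * b = 1) :
    liftInvolutions ha hb (sr 1) = b := by
  change a * (a * b) ^ (1 : ℤ) = b
  rw [zpow_one, ← mul_assoc, ha, one_mul]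

end LiftInvolutions

end DihedralGroup

open Multiplicative

theorem Multiplicative.monoidHom_ext_zmod_two {M : Type*} [Monoid M]
    {f g : Multiplicative (ZMod 2) →* M} (h : f (ofAdd 1) = g (ofAdd 1)) : f = g := by
  ext x
  fin_cases x
  exacts [(map_one f).trans (map_one g).symm, h]

/-- The infinite dihedral group is the free product `ℤ/2ℤ * ℤ/2ℤ`: the homomorphism from the
coproduct of two copies of `ℤ/2ℤ` to `DihedralGroup 0` sending the generator of the first factor
to the reflection `sr 0` and the generator of the second factor to the reflection `sr 1` is an
isomorphism (i.e. it is bijective). -/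
theorem infinite_dihedral_is_free_product
    (φ : Monoid.Coprod (Multiplicative (ZMod 2)) (Multiplicative (ZMod 2)) →* DihedralGroup 0)
    (h₁ : φ (Monoid.Coprod.inl (Multiplicative.ofAdd (1 : ZMod 2))) = sr (0 : ZMod 0))
    (h₂ : φ (Monoid.Coprod.inr (Multiplicative.ofAdd (1 : ZMod 2))) = sr (1 : ZMod 0)) :
    Function.Bijective φ := by
  have hgen {N : Type} [Monoid N] (f : Multiplicative (ZMod 2) →* N) :
      f (ofAdd 1) * f (ofAdd 1) = 1 := by
    rw [← map_mul, show (ofAdd 1 * ofAdd 1 : Multiplicative (ZMod 2)) = 1 by decide, map_one]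
  let ψ := liftInvolutions (hgen (Monoid.Coprod.inl (N := Multiplicative (ZMod 2))))
    (hgen (Monoid.Coprod.inr (M := Multiplicative (ZMod 2))))
  have hψφ : ψ.comp φ = MonoidHom.id _ :=
    Monoid.Coprod.hom_ext (monoidHom_ext_zmod_two (by simp [ψ, h₁]))
      (monoidHom_ext_zmod_two (by simp [ψ, h₂]))
  have hφψ : φ.comp ψ = MonoidHom.id _ := hom_ext_sr (by simp [ψ, h₁]) (by simp [ψ, h₂])
  exact (φ.toMulEquiv ψ hψφ hφψ).bijective
end

section
/- Let p be a prime number. For m ≥ n ≥ 1, let φ_{mn} : D_{p^m} → D_{p^n} be the group homomorphism between finite dihedral groups sending r i to r (i mod p^n) and sr i to sr (i mod p^n). Let L be the subgroup of the product ∏_{n ≥ 1} D_{p^n} consisting of compatible sequences, i.e. those (x_n)_n with φ_{mn}(x_m) = x_n for all m ≥ n, equipped with the topology induced from the product of the discrete topologies. Then L is isomorphic as a topological group to the semidirect product ℤ_p ⋊ ℤ/2ℤ, where ℤ_p is the ring of p-adic integers with its usual topology, the nontrivial element of ℤ/2ℤ acts on the additive group of ℤ_p by negation, and the semidirect product carries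 the product topology. -/
open DihedralGroup

/-- The canonical map `DihedralGroup b → DihedralGroup a` (for `a ∣ b`) sending `r i` to
`r (i mod a)` and `sr i` to `sr (i mod a)`. -/
def dihedralTransitionFun {a b : ℕ} (h : a ∣ b) : DihedralGroup b → DihedralGroup a
  | .r i => .r (ZMod.castHom h (ZMod a) i)
  | .sr i => .sr (ZMod.castHom h (ZMod a) i)

/-- The canonical group homomorphism `DihedralGroup b →* DihedralGroup a` (for `a ∣ b`) sending
`r i` to `r (i mod a)` and `sr i` to `sr (i mod a)`. -/
def dihedralTransition {a b : ℕ} (h : a ∣ b) : DihedralGroup b →* DihedralGroup a where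
  toFun := dihedralTransitionFun h
  map_one' := by
    show dihedralTransitionFun h (DihedralGroup.r 0) = _
    simp [dihedralTransitionFun, DihedralGroup.one_def, -DihedralGroup.r_zero]
  map_mul' := by
    rintro (i | i) (j | j) <;>
      simp [dihedralTransitionFun, map_add, map_sub]

/-- The projective limit `L` of the system `(D_{p^n})_{n ≥ 1}` with the transition maps
`φ_{mn} : D_{p^m} → D_{p^n}`, realized as the subgroup of compatible sequences in the product
`∏_{n ≥ 1} D_{p^n}` (indexed here by `n : ℕ`, the `n`-th factor being `D_{p^(n+1)}`). -/
def dihedralCompatible (p : ℕ) :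
    Subgroup (Π n : ℕ, DihedralGroup (p ^ (n + 1))) where
  carrier := {x | ∀ m n (h : n ≤ m),
    dihedralTransition (pow_dvd_pow p (Nat.succ_le_succ h)) (x m) = x n}
  one_mem' := by
    intro m n h
    simp only [Pi.one_apply, map_one]
  mul_mem' := by
    intro x y hx hy m n h
    simp only [Pi.mul_apply, map_mul, hx m n h, hy m n h]
  inv_mem' := by
    intro x hx m n h
    simp only [Pi.inv_apply, map_inv, hx m n h]

/-!
Send `(a, s) ∈ ℤ_p ⋊ ℤ/2ℤ` to the sequence `(r (a mod p^(n+1)) * (sr 0)^s)_n`. Since conjugation by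
`sr 0` inverts rotations, exactly as `s = 1` negates `a`, each coordinate is a homomorphism. The map
is bijective because every element of `D_k` is uniquely `r i * (sr 0)^s` with `i ∈ ℤ/kℤ`, and
`ℤ_p` is the inverse limit of the rings `ℤ/p^nℤ`. It is continuous because reduction mod `p^n`
is locally constant on `ℤ_p`; being a continuous bijection from a compact space onto a Hausdorff
one, it is a homeomorphism.
-/

namespace PadicInt

variable {p : ℕ} [Fact p.Prime]

theorem continuous_toZModPow (n : ℕ) :
    Continuous (toZModPow n : ℤ_[p] → ZMod (p ^ n)) := by
  refine continuous_of_continuousAt_zero (toZModPow n) ?_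
  rw [ContinuousAt, map_zero, nhds_discrete (ZMod (p ^ n)), Filter.tendsto_pure]
  have hp : (0 : ℝ) < p := by exact_mod_cast (Fact.out : p.Prime).pos
  filter_upwards [Metric.closedBall_mem_nhds (0 : ℤ_[p]) (zpow_pos hp (-n : ℤ))] with x hx
  rwa [mem_closedBall_zero_iff, norm_le_pow_iff_mem_span_pow, ← ker_toZModPow] at hx

theorem exists_toZModPow_succ_eq (c : ∀ n, ZMod (p ^ (n + 1)))
    (hc : ∀ n, ZMod.cast (c (n + 1)) = c n) :
    ∃ z : ℤ_[p], ∀ n, toZModPow (n + 1) z = c n := by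
  let f : ℕ → ℤ := fun i => (c i).val
  have hdvd : ∀ i, (p : ℤ) ^ i ∣ f (i + 1) - f i := fun i => by
    refine (pow_dvd_pow _ i.le_succ).trans ?_
    rw [← Nat.cast_pow, ← ZMod.intCast_eq_intCast_iff_dvd_sub, Int.cast_natCast,
      Int.cast_natCast, ZMod.natCast_zmod_val, ZMod.natCast_val, hc]
  refine ⟨ofIntSeq _ (isCauSeq_padicNorm_of_pow_dvd_sub f p hdvd), fun n => ?_⟩
  rw [toZModPow_ofIntSeq_of_pow_dvd_sub f p hdvd (n + 1), Int.cast_natCast, ZMod.natCast_val, hc]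

end PadicInt

theorem Multiplicative.zmod_two_cases (s : Multiplicative (ZMod 2)) : s = 1 ∨ s = .ofAdd 1 := by
  revert s; decide

namespace DihedralGroup

def rotationHom (n : ℕ) : Multiplicative (ZMod n) →* DihedralGroup n where
  toFun i := r i.toAdd
  map_one' := rfl
  map_mul' _ _ := (r_mul_r _ _).symm

def reflectionHom (n : ℕ) : Multiplicative (ZMod 2) →* DihedralGroup n where
  toFun s := sr 0 ^ s.toAdd.val
  map_one' := pow_zero _
  map_mul' s t := by
    have h := pow_mod_orderOf (sr (0 : ZMod n)) (s.toAdd.val + t.toAdd.val)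
    rwa [orderOf_sr, ← ZMod.val_add, pow_add] at h

variable {n : ℕ}

theorem reflectionHom_ofAdd_one : reflectionHom n (.ofAdd 1) = sr 0 := pow_one _

/-- Coordinates of the normal form `d = r (rotationPart d) * reflectionHom n (reflectionPart d)`;
in particular `sr i = r (-i) * sr 0`. -/
def rotationPart : DihedralGroup n → ZMod n
  | r i => i
  | sr i => -i

def reflectionPart : DihedralGroup n → Multiplicative (ZMod 2)
  | r _ => 1
  | sr _ => .ofAdd 1

theorem rotationPart_r_mul_reflectionHom (i : ZMod n) (s : Multiplicative (ZMod 2)) :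
    rotationPart (r i * reflectionHom n s) = i := by
  obtain rfl | rfl := Multiplicative.zmod_two_cases s
  · rw [map_one, mul_one]; rfl
  · rw [reflectionHom_ofAdd_one, r_mul_sr, rotationPart, zero_sub, neg_neg]

theorem reflectionPart_r_mul_reflectionHom (i : ZMod n) (s : Multiplicative (ZMod 2)) :
    reflectionPart (r i * reflectionHom n s) = s := by
  obtain rfl | rfl := Multiplicative.zmod_two_cases s
  · rw [map_one, mul_one]; rfl
  · rw [reflectionHom_ofAdd_one, r_mul_sr]; rfl

theorem r_rotationPart_mul_reflectionHom_reflectionPart (d : DihedralGroup n) :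
    r (rotationPart d) * reflectionHom n (reflectionPart d) = d := by
  cases d with
  | r i => exact mul_one _
  | sr i => rw [reflectionPart, reflectionHom_ofAdd_one, r_mul_sr, rotationPart, sub_neg_eq_add,
      zero_add]

variable {a b : ℕ} (h : a ∣ b)

theorem rotationPart_dihedralTransition (d : DihedralGroup b) :
    rotationPart (dihedralTransition h d) = ZMod.cast (rotationPart d) := by
  cases d <;> simp [dihedralTransition, dihedralTransitionFun, rotationPart, ZMod.cast_neg h]

theorem reflectionPart_dihedralTransition (d : DihedralGroup b) :
    reflectionPart (dihedralTransition h d) = reflectionPart d := by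
  cases d <;> rfl

theorem dihedralTransition_r_mul_reflectionHom (i : ZMod b) (s : Multiplicative (ZMod 2)) :
    dihedralTransition h (r i * reflectionHom b s) = r (ZMod.cast i) * reflectionHom a s := by
  rw [← r_rotationPart_mul_reflectionHom_reflectionPart (dihedralTransition h _),
    rotationPart_dihedralTransition, reflectionPart_dihedralTransition,
    rotationPart_r_mul_reflectionHom, reflectionPart_r_mul_reflectionHom]

section SemidirectLift

variable {N : Type*} [CommGroup N] (φ : Multiplicative (ZMod 2) →* MulAut N)

def semidirectLift (hφ : φ (.ofAdd 1) = MulEquiv.inv N) (f : N →* Multiplicative (ZMod n)) :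
    N ⋊[φ] Multiplicative (ZMod 2) →* DihedralGroup n :=
  SemidirectProduct.lift ((rotationHom n).comp f) (reflectionHom n) fun s => by
    obtain rfl | rfl := Multiplicative.zmod_two_cases s
    · ext; simp
    · ext x
      simp only [MonoidHom.comp_apply, MulEquiv.coe_toMonoidHom, hφ, MulEquiv.inv_apply, map_inv,
        MulAut.conj_apply, reflectionHom_ofAdd_one, inv_sr]
      show r _ = sr 0 * r _ * sr 0
      rw [sr_mul_r, sr_mul_sr, zero_add, zero_sub]

theorem semidirectLift_apply (hφ : φ (.ofAdd 1) = MulEquiv.inv N)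
    (f : N →* Multiplicative (ZMod n)) (w : N ⋊[φ] Multiplicative (ZMod 2)) :
    semidirectLift φ hφ f w = r (f w.left).toAdd * reflectionHom n w.right :=
  rfl

end SemidirectLift

end DihedralGroup

open DihedralGroup

section DihedralLimit

variable {p : ℕ} [Fact p.Prime]
  (φ : Multiplicative (ZMod 2) →* MulAut (Multiplicative ℤ_[p]))
  (hφ : φ (.ofAdd 1) = MulEquiv.inv (Multiplicative ℤ_[p]))

noncomputable def semidirectToDihedralLimit :
    Multiplicative ℤ_[p] ⋊[φ] Multiplicative (ZMod 2) →* dihedralCompatible p :=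
  (MonoidHom.pi fun n => semidirectLift φ hφ
      (AddMonoidHom.toMultiplicative (PadicInt.toZModPow (n + 1)).toAddMonoidHom)).codRestrict _
    fun w m n h => by
      show dihedralTransition _
          (r (PadicInt.toZModPow (m + 1) w.left.toAdd) * reflectionHom _ w.right) =
        r (PadicInt.toZModPow (n + 1) w.left.toAdd) * reflectionHom _ w.right
      rw [dihedralTransition_r_mul_reflectionHom, PadicInt.cast_toZModPow _ _ (by omega)]

theorem semidirectToDihedralLimit_apply_coe
    (w : Multiplicative ℤ_[p] ⋊[φ] Multiplicative (ZMod 2)) (n : ℕ) :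
    (semidirectToDihedralLimit φ hφ w : Π n, DihedralGroup (p ^ (n + 1))) n =
      r (PadicInt.toZModPow (n + 1) w.left.toAdd) * reflectionHom _ w.right :=
  rfl

theorem semidirectToDihedralLimit_injective :
    Function.Injective (semidirectToDihedralLimit φ hφ) := by
  intro w w' hw
  have hn n := congrFun (congrArg Subtype.val hw) n
  simp only [semidirectToDihedralLimit_apply_coe] at hn
  have hrot := fun n => congrArg rotationPart (hn n)
  have hrefl := congrArg reflectionPart (hn 0)
  simp only [rotationPart_r_mul_reflectionHom, reflectionPart_r_mul_reflectionHom] at hrot hrefl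
  refine SemidirectProduct.ext
    (Multiplicative.toAdd.injective (PadicInt.ext_of_toZModPow.1 fun n => ?_)) hrefl
  rw [← PadicInt.cast_toZModPow n (n + 1) n.le_succ, hrot, PadicInt.cast_toZModPow _ _ n.le_succ]

theorem semidirectToDihedralLimit_surjective :
    Function.Surjective (semidirectToDihedralLimit φ hφ) := by
  intro x
  have hcompat n m (h : n ≤ m) := x.2 m n h
  obtain ⟨z, hz⟩ := PadicInt.exists_toZModPow_succ_eq (fun n => rotationPart (x.1 n))
    fun n => by rw [← hcompat n (n + 1) n.le_succ, rotationPart_dihedralTransition]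
  refine ⟨⟨.ofAdd z, reflectionPart (x.1 0)⟩, Subtype.ext (funext fun n => ?_)⟩
  rw [semidirectToDihedralLimit_apply_coe, toAdd_ofAdd, hz, ← hcompat 0 n n.zero_le,
    reflectionPart_dihedralTransition, r_rotationPart_mul_reflectionHom_reflectionPart]

theorem continuous_semidirectToDihedralLimit
    [TopologicalSpace (Multiplicative ℤ_[p] ⋊[φ] Multiplicative (ZMod 2))]
    (hleft : Continuous (SemidirectProduct.left (φ := φ)))
    (hright : Continuous (SemidirectProduct.right (φ := φ)))
    [∀ n, TopologicalSpace (DihedralGroup (p ^ (n + 1)))]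
    [∀ n, DiscreteTopology (DihedralGroup (p ^ (n + 1)))] :
    Continuous (semidirectToDihedralLimit φ hφ) := by
  refine Continuous.subtype_mk (continuous_pi fun n => ?_) _
  have hcoords : Continuous fun w : Multiplicative ℤ_[p] ⋊[φ] Multiplicative (ZMod 2) =>
      (PadicInt.toZModPow (n + 1) w.left.toAdd, w.right) :=
    ((PadicInt.continuous_toZModPow _).comp (continuous_toAdd.comp hleft)).prodMk hright
  have hnormalForm : Continuous fun c : ZMod (p ^ (n + 1)) × Multiplicative (ZMod 2) =>
      r c.1 * reflectionHom _ c.2 :=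
    continuous_of_discreteTopology
  exact hnormalForm.comp hcoords

end DihedralLimit

/-- The projective limit of the dihedral groups `D_{p^n}` (with the product-of-discrete
topologies) is isomorphic, as a topological group, to the semidirect product `ℤ_p ⋊ ℤ/2ℤ`,
where the nontrivial element of `ℤ/2ℤ` acts on `ℤ_p` by negation and the semidirect product
carries the product topology. -/
theorem dihedral_limit_iso_padic_semidirect (p : ℕ) [Fact p.Prime]
    (φ : Multiplicative (ZMod 2) →* MulAut (Multiplicative (PadicInt p)))
    (hφ : φ (Multiplicative.ofAdd (1 : ZMod 2)) = MulEquiv.inv (Multiplicative (PadicInt p))) :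
    letI : ∀ n : ℕ, TopologicalSpace (DihedralGroup (p ^ (n + 1))) := fun _ => ⊥
    letI : TopologicalSpace (ZMod 2) := ⊥
    letI : TopologicalSpace
        (SemidirectProduct (Multiplicative (PadicInt p)) (Multiplicative (ZMod 2)) φ) :=
      TopologicalSpace.induced (fun x => (x.left, x.right)) inferInstance
    ∃ e : dihedralCompatible p ≃*
        SemidirectProduct (Multiplicative (PadicInt p)) (Multiplicative (ZMod 2)) φ,
      Continuous e ∧ Continuous e.symm := by
  let _ : ∀ n : ℕ, TopologicalSpace (DihedralGroup (p ^ (n + 1))) := fun _ => ⊥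
  let _ : TopologicalSpace (ZMod 2) := ⊥
  let _ : TopologicalSpace
      (SemidirectProduct (Multiplicative (PadicInt p)) (Multiplicative (ZMod 2)) φ) :=
    TopologicalSpace.induced (fun x => (x.left, x.right)) inferInstance
  have : ∀ n, DiscreteTopology (DihedralGroup (p ^ (n + 1))) := fun _ => ⟨rfl⟩
  have hpair : Continuous fun w : Multiplicative ℤ_[p] ⋊[φ] Multiplicative (ZMod 2) =>
      (w.left, w.right) := continuous_induced_dom
  have hΨ := continuous_semidirectToDihedralLimit φ hφ hpair.fst hpair.snd
  have : CompactSpace (Multiplicative ℤ_[p] ⋊[φ] Multiplicative (ZMod 2)) :=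
    SemidirectProduct.equivProd.symm.surjective.compactSpace
      (continuous_induced_rng (g := SemidirectProduct.equivProd.symm).2 continuous_id)
  let e := MulEquiv.ofBijective _ ⟨semidirectToDihedralLimit_injective φ hφ,
    semidirectToDihedralLimit_surjective φ hφ⟩
  exact ⟨e.symm, hΨ.continuous_symm_of_equiv_compact_to_t2 (f := e.toEquiv), hΨ⟩
end

section
/- Let p be a prime number and n ≥ 1, and set q = p^n. Let K = ℝ((t)) be the field of formal Laurent series over ℝ and L = ℂ((s)) the field of formal Laurent series over ℂ, regarded as a K-algebra via the injective ring homomorphism K → L that maps the coefficients via the inclusion ℝ → ℂ and scales the exponents by q (so that t is sent to s^q, identifying L with ℂ((t^{1/q}))). Then L is a Galois extension of K of degree 2q, and the Galois group Gal(L/K) is isomorphic to the dihedral group D_q of order 2q. -/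
/-!
Fix a primitive `q`-th root of unity `ζ`. The dihedral group `D_q` acts on `ℂ((s))` by ring
automorphisms: the rotation `r i` is the substitution `s ↦ ζ ^ i • s`, multiplying the coefficient
of `s ^ m` by `ζ ^ (i * m)`, and the reflection `sr 0` conjugates the coefficients. This action is
faithful, and a series is fixed by it exactly when its coefficients are real and supported on `qℤ`,
i.e. when it comes from `ℝ((t))`. Hence `D_q` is a Galois group of `ℂ((s)) / ℝ((t))` in Artin's sense (`IsGaloisGroup`),
which makes the extension Galois of degree `|D_q| = 2q` with automorphism group `D_q`.
-/

/-- The ring homomorphism `ℝ((t)) →+* ℂ((t))` extending coefficients along the inclusion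
`ℝ → ℂ`. -/
noncomputable def laurentOfReal : LaurentSeries ℝ →+* LaurentSeries ℂ where
  toFun x := x.map (Complex.ofRealHom : ℝ →+* ℂ)
  map_zero' := by ext g; simp
  map_one' := by ext g; by_cases h : g = (0 : ℤ) <;> simp [h, HahnSeries.coeff_one]
  map_add' x y := by ext g; simp
  map_mul' x y := HahnSeries.map_mul Complex.ofRealHom.toNonUnitalRingHom

/-- The injective ring homomorphism `ℝ((t)) →+* ℂ((s))` sending `Σ aₖ tᵏ` to `Σ (aₖ : ℂ) s^(qk)`:
the composition of coefficientwise extension of scalars along `ℝ → ℂ` with the exponent-rescaling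
embedding induced by `k ↦ q·k` on `ℤ`.  It identifies `ℂ((s))` with `ℂ((t^(1/q)))` as an
extension of `ℝ((t))`. -/
noncomputable def laurentInclusion (q : ℕ) (hq : 0 < q) :
    LaurentSeries ℝ →+* LaurentSeries ℂ :=
  (HahnSeries.embDomainRingHom (zmultiplesHom ℤ (q : ℤ))
      (fun a b hab => by
        have hq' : (q : ℤ) ≠ 0 := by exact_mod_cast hq.ne'
        simpa [zmultiplesHom_apply, smul_eq_mul] using
          mul_right_cancel₀ hq' (by simpa [zmultiplesHom_apply, smul_eq_mul] using hab))
      (fun g g' => by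
        have hq' : (0 : ℤ) < (q : ℤ) := by exact_mod_cast hq
        simp [zmultiplesHom_apply, smul_eq_mul, mul_le_mul_iff_left₀ hq'])).comp laurentOfReal

theorem Set.IsPWO.preimage_orderEmbedding {α β : Type*} [Preorder α] [Preorder β] {s : Set β}
    (hs : s.IsPWO) (f : α ↪o β) : (f ⁻¹' s).IsPWO :=
  partiallyWellOrderedOn_iff_exists_lt.2 fun g hg => by
    obtain ⟨m, n, hmn, h⟩ := hs.exists_lt hg
    exact ⟨m, n, hmn, f.le_iff_le.1 h⟩

namespace HahnSeries

section EmbDomain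

variable {Γ Γ' R : Type*} [PartialOrder Γ] [PartialOrder Γ'] [Zero R]

theorem exists_embDomain_eq {f : Γ ↪o Γ'} {x : R⟦Γ'⟧} (hx : x.support ⊆ Set.range f) :
    ∃ y : R⟦Γ⟧, embDomain f y = x := by
  refine ⟨⟨fun a => x.coeff (f a), x.isPWO_support.preimage_orderEmbedding f⟩, ?_⟩
  ext b
  by_cases hb : b ∈ Set.range f
  · obtain ⟨a, rfl⟩ := hb
    exact embDomain_coeff
  · rw [embDomain_of_notMem_range hb]
    exact (not_not.1 fun h => hb (hx h)).symm

end EmbDomain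

section Map

variable {Γ R : Type*} [AddCommMonoid Γ] [PartialOrder Γ] [IsOrderedCancelAddMonoid Γ] [Semiring R]

noncomputable def mapAut : RingAut R →* RingAut R⟦Γ⟧ where
  toFun σ :=
    { toFun x := x.map σ
      invFun x := x.map σ.symm
      left_inv x := by ext; simp
      right_inv x := by ext; simp
      map_add' x y := by ext; simp
      map_mul' x y := HahnSeries.map_mul (σ : R →+* R).toNonUnitalRingHom }
  map_one' := by ext; rfl
  map_mul' σ τ := by ext; rfl

@[simp] theorem coeff_mapAut (σ : RingAut R) (x : R⟦Γ⟧) (g : Γ) :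
    (mapAut σ x).coeff g = σ (x.coeff g) := rfl

end Map

section Twist

variable {Γ R : Type*} [AddCommMonoid Γ] [PartialOrder Γ] [IsOrderedCancelAddMonoid Γ]
  [CommSemiring R]

/-- For `Γ = ℤ` and `χ = (u ^ ·)` this is the substitution `X ↦ u • X`. -/
noncomputable def twist (χ : Multiplicative Γ →* R) : R⟦Γ⟧ →+* R⟦Γ⟧ where
  toFun x :=
    { coeff g := χ (.ofAdd g) * x.coeff g
      isPWO_support' := x.isPWO_support.mono (Function.support_mul_subset_right _ _) }
  map_one' := by ext g; by_cases h : g = 0 <;> simp [h, coeff_one]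
  map_zero' := by ext; simp
  map_add' x y := by ext; simp [mul_add]
  map_mul' x y := by
    ext g
    refine Eq.trans ?_ (Eq.symm <| coeff_mul_left' x.isPWO_support
      (Function.support_mul_subset_right _ _))
    show χ (.ofAdd g) * (x * y).coeff g = _
    rw [coeff_mul, Finset.mul_sum]
    refine Eq.trans (Finset.sum_congr rfl fun ij hij => ?_)
      (Finset.sum_subset (Finset.antidiagonal_mono_right (Function.support_mul_subset_right _ _))
        fun ij hbig hsmall => ?_).symm
    · rw [← (Finset.mem_antidiagonal.1 hij).2.2]
      simp only [ofAdd_add, map_mul]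
      ring
    · obtain ⟨hi, -, hij⟩ := Finset.mem_antidiagonal.1 hbig
      exact mul_eq_zero_of_right _ <| Function.notMem_support.1 fun hj =>
        hsmall (Finset.mem_antidiagonal.2 ⟨hi, hj, hij⟩)

@[simp] theorem coeff_twist (χ : Multiplicative Γ →* R) (x : R⟦Γ⟧) (g : Γ) :
    (twist χ x).coeff g = χ (.ofAdd g) * x.coeff g := rfl

noncomputable def twistAut : (Multiplicative Γ →* Rˣ) →* RingAut R⟦Γ⟧ where
  toFun χ :=
    { twist ((Units.coeHom R).comp χ) with
      invFun := twist ((Units.coeHom R).comp χ⁻¹)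
      left_inv x := by ext; simp [← mul_assoc, ← Units.val_mul]
      right_inv x := by ext; simp [← mul_assoc, ← Units.val_mul] }
  map_one' := by ext; simp
  map_mul' χ ψ := by ext; simp [mul_assoc]

@[simp] theorem coeff_twistAut (χ : Multiplicative Γ →* Rˣ) (x : R⟦Γ⟧) (g : Γ) :
    (twistAut χ x).coeff g = χ (.ofAdd g) * x.coeff g := rfl

theorem twistAut_injective : Function.Injective (twistAut : _ → RingAut R⟦Γ⟧) := by
  intro χ ψ h
  ext g
  simpa using congr_arg (fun σ : RingAut R⟦Γ⟧ => (σ (single g 1)).coeff g) h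

end Twist

end HahnSeries

namespace DihedralGroup

variable {n : ℕ} {H : Type*} [Group H]

def lift (ρ : Multiplicative (ZMod n) →* H) (s : H) (hs : s * s = 1)
    (hsρ : ∀ a, s * ρ a = ρ a⁻¹ * s) : DihedralGroup n →* H where
  toFun
    | r i => ρ (.ofAdd i)
    | sr i => s * ρ (.ofAdd i)
  map_one' := by rw [one_def]; exact ρ.map_one
  map_mul' g h := by
    have hρs (a) : ρ a * s = s * ρ a⁻¹ := by simpa using (hsρ a⁻¹).symm
    have hsub (i j : ZMod n) : ρ (.ofAdd (j - i)) = ρ (.ofAdd i)⁻¹ * ρ (.ofAdd j) := by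
      rw [← map_mul, ofAdd_sub, div_eq_inv_mul]
    rcases g with i | i <;> rcases h with j | j <;>
      simp only [r_mul_r, r_mul_sr, sr_mul_r, sr_mul_sr]
    · rw [ofAdd_add, map_mul]
    · rw [hsub, ← mul_assoc (ρ _) s, hρs, mul_assoc]
    · rw [ofAdd_add, map_mul, mul_assoc]
    · rw [hsub, mul_assoc s, ← mul_assoc (ρ _) s, hρs, ← mul_assoc, ← mul_assoc, hs, one_mul]

@[simp] theorem lift_r (ρ : Multiplicative (ZMod n) →* H) (s : H) (hs : s * s = 1)
    (hsρ : ∀ a, s * ρ a = ρ a⁻¹ * s) (i : ZMod n) : lift ρ s hs hsρ (r i) = ρ (.ofAdd i) := rfl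

@[simp] theorem lift_sr (ρ : Multiplicative (ZMod n) →* H) (s : H) (hs : s * s = 1)
    (hsρ : ∀ a, s * ρ a = ρ a⁻¹ * s) (i : ZMod n) : lift ρ s hs hsρ (sr i) = s * ρ (.ofAdd i) :=
  rfl

theorem lift_injective (ρ : Multiplicative (ZMod n) →* H) (s : H) (hs : s * s = 1)
    (hsρ : ∀ a, s * ρ a = ρ a⁻¹ * s) (hρ : Function.Injective ρ) (hs_ne : ∀ a b, s * ρ a ≠ ρ b) :
    Function.Injective (lift ρ s hs hsρ) := by
  rintro (i | i) (j | j) h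
  · exact congrArg r (hρ h)
  · exact absurd h.symm (hs_ne _ _)
  · exact absurd h (hs_ne _ _)
  · exact congrArg sr (hρ (mul_left_cancel h))

end DihedralGroup

namespace IsPrimitiveRoot

variable {R : Type*} [CommRing R] {ζ : Rˣ} {q : ℕ}

noncomputable def zmodPowHom (hζ : IsPrimitiveRoot ζ q) : Multiplicative (ZMod q) →* Rˣ :=
  (Subgroup.zpowers ζ).subtype.comp (AddEquiv.toMultiplicativeLeft hζ.zmodEquivZPowers).toMonoidHom

theorem zmodPowHom_injective (hζ : IsPrimitiveRoot ζ q) : Function.Injective hζ.zmodPowHom :=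
  Subtype.val_injective.comp (AddEquiv.toMultiplicativeLeft hζ.zmodEquivZPowers).injective

@[simp] theorem zmodPowHom_ofAdd_intCast (hζ : IsPrimitiveRoot ζ q) (k : ℤ) :
    hζ.zmodPowHom (.ofAdd (k : ZMod q)) = ζ ^ k := by
  simp [zmodPowHom]

@[simp] theorem zmodPowHom_ofAdd_one (hζ : IsPrimitiveRoot ζ q) : hζ.zmodPowHom (.ofAdd 1) = ζ := by
  simpa using hζ.zmodPowHom_ofAdd_intCast 1

theorem zmodPowHom_pow_eq_one (hζ : IsPrimitiveRoot ζ q) (a : Multiplicative (ZMod q)) :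
    hζ.zmodPowHom a ^ q = 1 := by
  have ha : a ^ q = 1 := by
    rw [← toAdd_eq_zero, toAdd_pow, nsmul_eq_mul, ZMod.natCast_self, zero_mul]
  rw [← map_pow, ha, map_one]

end IsPrimitiveRoot

section Inclusion

variable {q : ℕ} (hq : 0 < q)

noncomputable def mulRightOrderEmbedding : ℤ ↪o ℤ :=
  OrderEmbedding.ofStrictMono (· * (q : ℤ)) (strictMono_mul_right_of_pos (by exact_mod_cast hq))

@[simp] theorem mulRightOrderEmbedding_apply (k : ℤ) : mulRightOrderEmbedding hq k = k * q := rfl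

theorem laurentInclusion_eq_embDomain (y : LaurentSeries ℝ) :
    laurentInclusion q hq y = HahnSeries.embDomain (mulRightOrderEmbedding hq) (laurentOfReal y) :=
  rfl

theorem coeff_laurentInclusion_mul (y : LaurentSeries ℝ) (k : ℤ) :
    (laurentInclusion q hq y).coeff (k * q) = y.coeff k := by
  rw [laurentInclusion_eq_embDomain, ← mulRightOrderEmbedding_apply hq, HahnSeries.embDomain_coeff]
  rfl

theorem coeff_laurentInclusion_of_not_dvd (y : LaurentSeries ℝ) {m : ℤ} (hm : ¬(q : ℤ) ∣ m) :
    (laurentInclusion q hq y).coeff m = 0 := by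
  rw [laurentInclusion_eq_embDomain]
  exact HahnSeries.embDomain_of_notMem_range fun ⟨k, hk⟩ => hm ⟨k, by simp [← hk, mul_comm]⟩

theorem exists_laurentInclusion_eq {x : LaurentSeries ℂ}
    (hreal : ∀ m, starRingEnd ℂ (x.coeff m) = x.coeff m)
    (hdvd : ∀ m, x.coeff m ≠ 0 → (q : ℤ) ∣ m) :
    ∃ y, laurentInclusion q hq y = x := by
  obtain ⟨x', rfl⟩ := HahnSeries.exists_embDomain_eq (f := mulRightOrderEmbedding hq) fun m hm => by
    obtain ⟨k, rfl⟩ := hdvd m hm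
    exact ⟨k, mul_comm _ _⟩
  refine ⟨x'.map Complex.reAddGroupHom, ?_⟩
  rw [laurentInclusion_eq_embDomain]
  congr 1
  ext k
  have hk := hreal (mulRightOrderEmbedding hq k)
  rw [HahnSeries.embDomain_coeff] at hk
  exact Complex.conj_eq_iff_re.1 hk

end Inclusion

namespace LaurentSeries

section Rotation

variable {R : Type*} [CommRing R] {ζ : Rˣ} {q : ℕ}

noncomputable def rotation (hζ : IsPrimitiveRoot ζ q) :
    Multiplicative (ZMod q) →* RingAut (LaurentSeries R) :=
  HahnSeries.twistAut.comp ((zpowersMulHom Rˣ).toMonoidHom.comp hζ.zmodPowHom)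

@[simp] theorem coeff_rotation (hζ : IsPrimitiveRoot ζ q) (a : Multiplicative (ZMod q))
    (x : LaurentSeries R) (m : ℤ) :
    (rotation hζ a x).coeff m = ↑(hζ.zmodPowHom a ^ m) * x.coeff m := rfl

theorem rotation_injective (hζ : IsPrimitiveRoot ζ q) : Function.Injective (rotation hζ) :=
  HahnSeries.twistAut_injective.comp <| (zpowersMulHom Rˣ).injective.comp hζ.zmodPowHom_injective

end Rotation

section Dihedral

open HahnSeries

variable {q : ℕ} {ζ : ℂˣ}

theorem mapAut_star_mul_rotation (hq : 0 < q) (hζ : IsPrimitiveRoot ζ q)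
    (a : Multiplicative (ZMod q)) :
    mapAut starRingAut * rotation hζ a = rotation hζ a⁻¹ * mapAut starRingAut := by
  have hu : starRingEnd ℂ (hζ.zmodPowHom a) = ↑(hζ.zmodPowHom a)⁻¹ := by
    rw [Units.val_inv_eq_inv_val, Complex.inv_eq_conj (Complex.norm_eq_one_of_pow_eq_one
      (by rw [← Units.val_pow_eq_pow_val, hζ.zmodPowHom_pow_eq_one, Units.val_one]) hq.ne')]
  ext x m
  rw [RingAut.mul_apply, RingAut.mul_apply, coeff_mapAut, coeff_rotation, coeff_rotation,
    coeff_mapAut, map_inv, map_mul]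
  simp [Units.val_zpow_eq_zpow_val, map_zpow₀, hu]

noncomputable def dihedralAut (hq : 0 < q) (hζ : IsPrimitiveRoot ζ q) :
    DihedralGroup q →* RingAut (LaurentSeries ℂ) :=
  DihedralGroup.lift (rotation hζ) (mapAut starRingAut) (by ext; simp)
    (mapAut_star_mul_rotation hq hζ)

theorem dihedralAut_injective (hq : 0 < q) (hζ : IsPrimitiveRoot ζ q) :
    Function.Injective (dihedralAut hq hζ) :=
  DihedralGroup.lift_injective _ _ _ _ (rotation_injective hζ) fun a b h => by
    have := congrArg (fun σ : RingAut (LaurentSeries ℂ) => (σ (C Complex.I)).coeff 0) h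
    exact Complex.I_ne_zero (CharZero.neg_eq_self_iff.1 (by simpa using this))

theorem rotation_laurentInclusion (hq : 0 < q) (hζ : IsPrimitiveRoot ζ q)
    (a : Multiplicative (ZMod q)) (y : LaurentSeries ℝ) :
    rotation hζ a (laurentInclusion q hq y) = laurentInclusion q hq y := by
  ext m
  rw [coeff_rotation]
  by_cases hm : (q : ℤ) ∣ m
  · obtain ⟨k, rfl⟩ := hm
    rw [zpow_mul, zpow_natCast, hζ.zmodPowHom_pow_eq_one, one_zpow, Units.val_one, one_mul]
  · rw [coeff_laurentInclusion_of_not_dvd hq y hm, mul_zero]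

theorem mapAut_star_laurentInclusion (hq : 0 < q) (y : LaurentSeries ℝ) :
    mapAut starRingAut (laurentInclusion q hq y) = laurentInclusion q hq y := by
  ext m
  rw [coeff_mapAut]
  by_cases hm : (q : ℤ) ∣ m
  · obtain ⟨k, rfl⟩ := hm
    rw [mul_comm, coeff_laurentInclusion_mul]
    exact Complex.conj_ofReal _
  · rw [coeff_laurentInclusion_of_not_dvd hq y hm, map_zero]

theorem dihedralAut_laurentInclusion (hq : 0 < q) (hζ : IsPrimitiveRoot ζ q)
    (g : DihedralGroup q) (y : LaurentSeries ℝ) :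
    dihedralAut hq hζ g (laurentInclusion q hq y) = laurentInclusion q hq y := by
  rcases g with i | i
  · exact rotation_laurentInclusion hq hζ _ y
  · rw [dihedralAut, DihedralGroup.lift_sr, RingAut.mul_apply, rotation_laurentInclusion,
      mapAut_star_laurentInclusion]

theorem exists_laurentInclusion_eq_of_forall_dihedralAut_eq (hq : 0 < q)
    (hζ : IsPrimitiveRoot ζ q) {x : LaurentSeries ℂ} (hx : ∀ g, dihedralAut hq hζ g x = x) :
    ∃ y, laurentInclusion q hq y = x := by
  refine exists_laurentInclusion_eq hq (fun m => ?_) (fun m hm => ?_)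
  · have h := congrArg (coeff · m) (hx (.sr 0))
    simpa [dihedralAut] using h
  · have h := congrArg (coeff · m) (hx (.r 1))
    simp only [dihedralAut, DihedralGroup.lift_r, coeff_rotation, hζ.zmodPowHom_ofAdd_one] at h
    exact (hζ.zpow_eq_one_iff_dvd m).1 (Units.val_eq_one.1 ((mul_eq_right₀ hm).1 h))

theorem isGaloisGroup_dihedralAut (hq : 0 < q) (hζ : IsPrimitiveRoot ζ q) :
    letI := (laurentInclusion q hq).toAlgebra
    letI := MulSemiringAction.compHom (LaurentSeries ℂ) (dihedralAut hq hζ)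
    IsGaloisGroup (DihedralGroup q) (LaurentSeries ℝ) (LaurentSeries ℂ) := by
  let := (laurentInclusion q hq).toAlgebra
  let := MulSemiringAction.compHom (LaurentSeries ℂ) (dihedralAut hq hζ)
  exact
    { faithful := ⟨fun h => dihedralAut_injective hq hζ (RingEquiv.ext h)⟩
      commutes := ⟨fun g y x => by
        show dihedralAut hq hζ g (laurentInclusion q hq y * x) =
          laurentInclusion q hq y * dihedralAut hq hζ g x
        rw [map_mul, dihedralAut_laurentInclusion]⟩
      isInvariant := ⟨fun _ hx => exists_laurentInclusion_eq_of_forall_dihedralAut_eq hq hζ hx⟩ }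

end Dihedral

end LaurentSeries

theorem laurent_galois_group_dihedral_general (p : ℕ) (hp : p.Prime) (n : ℕ)
    (q : ℕ) (hq : q = p ^ n) :
    letI : Algebra (LaurentSeries ℝ) (LaurentSeries ℂ) :=
      (laurentInclusion q (hq ▸ pow_pos hp.pos n)).toAlgebra
    IsGalois (LaurentSeries ℝ) (LaurentSeries ℂ) ∧
    Module.finrank (LaurentSeries ℝ) (LaurentSeries ℂ) = 2 * q ∧
    Nonempty ((LaurentSeries ℂ ≃ₐ[LaurentSeries ℝ] LaurentSeries ℂ) ≃* DihedralGroup q) := by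
  have hq0 : 0 < q := hq ▸ pow_pos hp.pos n
  have : NeZero q := ⟨hq0.ne'⟩
  let := (laurentInclusion q hq0).toAlgebra
  have hζ := (Complex.isPrimitiveRoot_exp q hq0.ne').isUnit_unit hq0.ne'
  let := MulSemiringAction.compHom (LaurentSeries ℂ) (LaurentSeries.dihedralAut hq0 hζ)
  have := LaurentSeries.isGaloisGroup_dihedralAut hq0 hζ
  refine ⟨IsGaloisGroup.isGalois (DihedralGroup q) _ _, ?_,
    ⟨(IsGaloisGroup.mulEquivAlgEquiv (DihedralGroup q) _ _).symm⟩⟩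
  rw [← IsGaloisGroup.card_eq_finrank (DihedralGroup q), DihedralGroup.nat_card]

/-- For `q = p^n` a prime power (`n ≥ 1`), `L = ℂ((t^(1/q)))` is a Galois extension of
`K = ℝ((t))` of degree `2q`, with Galois group isomorphic to the dihedral group `D_q` of order
`2q`. -/
theorem laurent_galois_group_dihedral (p : ℕ) (hp : p.Prime) (n : ℕ) (hn : 1 ≤ n)
    (q : ℕ) (hq : q = p ^ n) :
    letI : Algebra (LaurentSeries ℝ) (LaurentSeries ℂ) :=
      (laurentInclusion q (hq ▸ pow_pos hp.pos n)).toAlgebra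
    IsGalois (LaurentSeries ℝ) (LaurentSeries ℂ) ∧
    Module.finrank (LaurentSeries ℝ) (LaurentSeries ℂ) = 2 * q ∧
    Nonempty ((LaurentSeries ℂ ≃ₐ[LaurentSeries ℝ] LaurentSeries ℂ) ≃* DihedralGroup q) :=
  laurent_galois_group_dihedral_general p hp n q hq
end
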